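/- Let H₁ and H₂ be finite-dimensional complex Hilbert spaces and endow H₁ ⊗ H₂ with the induced inner product. Let (e₁, …, eₙ) and (f₁, …, fₙ) be orthonormal families in H₁ and H₂ respectively, let λ₁, …, λₙ be nonnegative reals with Σᵢ λᵢ = 1, and let ψ = Σᵢ √λᵢ eᵢ ⊗ fᵢ. Let 1 ≤ k ≤ n and let φ be any unit vector in H₁ ⊗ H₂ expressible as a sum of at most k simple tensors, i.e., φ = Σⱼ₌₁ᵏ uⱼ ⊗ vⱼ for some vectors uⱼ ∈ H₁, vⱼ ∈ H₂. Then |⟨ψ, φ⟩|² ≤ λ₁↓ + ⋯ + λ_k↓, where λ₁↓ ≥ ⋯ ≥ λₙ↓ are the λᵢ arranged in decreasing order. -/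

import Mathlib

/-!
Let `P` be the orthogonal projection onto `U = span {u₁, …, u_k}`, so `dim U ≤ k`. Since `φ`
only pairs with the `U`-components of the first tensor factor, `⟪ψ, φ⟫ = ⟪ψ', φ⟫` for
`ψ' = ∑ᵢ √λᵢ (P eᵢ) ⊗ fᵢ`, and Cauchy–Schwarz gives `|⟪ψ, φ⟫|² ≤ ‖ψ'‖² = ∑ᵢ λᵢ tᵢ` with
`tᵢ = ‖P eᵢ‖²`. These weights satisfy `0 ≤ tᵢ ≤ 1` and, by Bessel's inequality,
`∑ᵢ tᵢ ≤ dim U ≤ k`; under such constraints `∑ᵢ λᵢ tᵢ` is largest when the weight `1` sits on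
the `k` largest `λᵢ`.
-/

open scoped InnerProductSpace
open Finset Module

theorem sum_mul_le_sum_of_threshold {ι : Type*} [Fintype ι] [DecidableEq ι] (s : Finset ι)
    {f g : ι → ℝ} {c : ℝ} (hc : 0 ≤ c) (hs : ∀ i ∈ s, c ≤ f i) (hsc : ∀ i ∉ s, f i ≤ c)
    (hg0 : ∀ i, 0 ≤ g i) (hg1 : ∀ i, g i ≤ 1) (hg : ∑ i, g i ≤ #s) :
    ∑ i, f i * g i ≤ ∑ i ∈ s, f i := by
  have hshift : ∑ i, (f i - c) * g i ≤ ∑ i ∈ s, (f i - c) := by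
    rw [← Fintype.sum_ite_mem s]
    refine sum_le_sum fun i _ => ?_
    split_ifs with hi
    · exact mul_le_of_le_one_right (sub_nonneg.2 (hs i hi)) (hg1 i)
    · exact mul_nonpos_of_nonpos_of_nonneg (sub_nonpos.2 (hsc i hi)) (hg0 i)
  calc ∑ i, f i * g i = ∑ i, (f i - c) * g i + c * ∑ i, g i := by
        rw [mul_sum, ← sum_add_distrib]; congr! 1; ring
    _ ≤ ∑ i ∈ s, (f i - c) + c * #s := by gcongr
    _ = ∑ i ∈ s, f i := by rw [sum_sub_distrib, sum_const, nsmul_eq_mul]; ring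

theorem Antitone.sum_mul_le_sum_filter_lt {n k : ℕ} (hk1 : 1 ≤ k) (hkn : k ≤ n)
    {l t : Fin n → ℝ} (hl : Antitone l) (hl0 : ∀ i, 0 ≤ l i)
    (ht0 : ∀ i, 0 ≤ t i) (ht1 : ∀ i, t i ≤ 1) (ht : ∑ i, t i ≤ k) :
    ∑ i, l i * t i ≤ ∑ i ∈ univ.filter (fun i : Fin n => (i : ℕ) < k), l i := by
  have hcard : #(univ.filter fun i : Fin n => (i : ℕ) < k) = k := by
    rw [Fin.card_filter_val_lt, min_eq_right hkn]
  refine sum_mul_le_sum_of_threshold _ (c := l ⟨k - 1, by omega⟩) (hl0 _) ?_ ?_ ht0 ht1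
    (by rwa [hcard])
  · intro i hi
    exact hl (Fin.mk_le_mk.2 (by simp at hi; omega))
  · intro i hi
    exact hl (Fin.mk_le_mk.2 (by simp at hi; omega))

section

variable {𝕜 E F G : Type*} [RCLike 𝕜] [NormedAddCommGroup E] [InnerProductSpace 𝕜 E]
  [NormedAddCommGroup F] [InnerProductSpace 𝕜 F] [NormedAddCommGroup G] [InnerProductSpace 𝕜 G]
  {ι κ : Type*} [Fintype ι] [Fintype κ]

theorem inner_sum_apply₂_eq_zero {μ : E →ₗ[𝕜] F →ₗ[𝕜] G}
    (hμ : ∀ a c b d, ⟪μ a b, μ c d⟫_𝕜 = ⟪a, c⟫_𝕜 * ⟪b, d⟫_𝕜)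
    {a : ι → E} {b : ι → F} {u : κ → E} {v : κ → F} (h : ∀ i j, ⟪a i, u j⟫_𝕜 = 0) :
    ⟪∑ i, μ (a i) (b i), ∑ j, μ (u j) (v j)⟫_𝕜 = 0 := by
  simp only [sum_inner, inner_sum, hμ, h, zero_mul, sum_const_zero]

theorem norm_sq_sum_apply₂_of_orthonormal {μ : E →ₗ[𝕜] F →ₗ[𝕜] G}
    (hμ : ∀ a c b d, ⟪μ a b, μ c d⟫_𝕜 = ⟪a, c⟫_𝕜 * ⟪b, d⟫_𝕜)
    {f : ι → F} (hf : Orthonormal 𝕜 f) (w : ι → E) :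
    ‖∑ i, μ (w i) (f i)‖ ^ 2 = ∑ i, ‖w i‖ ^ 2 := by
  classical
  have hinner :
      ⟪∑ i, μ (w i) (f i), ∑ i, μ (w i) (f i)⟫_𝕜 = ∑ i, ((‖w i‖ ^ 2 : ℝ) : 𝕜) := by
    simp only [sum_inner, inner_sum, hμ, orthonormal_iff_ite.1 hf, mul_ite, mul_one, mul_zero,
      sum_ite_eq', mem_univ, if_true]
    simp only [inner_self_eq_norm_sq_to_K, RCLike.ofReal_pow]
  rw [← RCLike.ofReal_inj (K := 𝕜), RCLike.ofReal_sum, ← hinner, inner_self_eq_norm_sq_to_K,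
    RCLike.ofReal_pow]

theorem Orthonormal.sum_norm_sq_starProjection_le_finrank {e : ι → E}
    (he : Orthonormal 𝕜 e) (K : Submodule 𝕜 E) [FiniteDimensional 𝕜 K] :
    ∑ i, ‖K.starProjection (e i)‖ ^ 2 ≤ finrank 𝕜 K := by
  let b := stdOrthonormalBasis 𝕜 K
  have hproj (x : E) : ‖K.starProjection x‖ ^ 2 = ∑ m, ‖⟪x, (b m : E)⟫_𝕜‖ ^ 2 := by
    rw [Submodule.starProjection_apply, Submodule.norm_coe, ← b.sum_sq_norm_inner_right]
    simp only [Submodule.inner_orthogonalProjectionOnto_eq_of_mem_left, norm_inner_symm]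
  calc ∑ i, ‖K.starProjection (e i)‖ ^ 2 = ∑ m, ∑ i, ‖⟪e i, (b m : E)⟫_𝕜‖ ^ 2 := by
        simp only [hproj]; exact sum_comm
    _ ≤ ∑ _m, 1 := sum_le_sum fun m _ => (he.sum_inner_products_le (b m : E)).trans_eq <| by
        rw [Submodule.norm_coe, b.orthonormal.1 m, one_pow]
    _ = finrank 𝕜 K := by simp

end

theorem sq_abs_inner_le_sum_largest_schmidt
    {H₁ H₂ H : Type*} [NormedAddCommGroup H₁] [InnerProductSpace ℂ H₁]
    [NormedAddCommGroup H₂] [InnerProductSpace ℂ H₂]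
    [NormedAddCommGroup H] [InnerProductSpace ℂ H]
    (μ : H₁ →ₗ[ℂ] H₂ →ₗ[ℂ] H)
    (hμ : ∀ (a c : H₁) (b d : H₂), ⟪μ a b, μ c d⟫_ℂ = ⟪a, c⟫_ℂ * ⟪b, d⟫_ℂ)
    {n : ℕ} (e : Fin n → H₁) (f : Fin n → H₂)
    (he : Orthonormal ℂ e) (hf : Orthonormal ℂ f)
    (lam : Fin n → ℝ) (hlam : ∀ i, 0 ≤ lam i)
    (σ : Equiv.Perm (Fin n)) (hσ : Antitone (lam ∘ σ))
    (ψ : H) (hψ : ψ = ∑ i, (Real.sqrt (lam i) : ℂ) • μ (e i) (f i))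
    {k : ℕ} (hk1 : 1 ≤ k) (hkn : k ≤ n)
    (u : Fin k → H₁) (v : Fin k → H₂)
    (φ : H) (hφ : φ = ∑ j, μ (u j) (v j)) (hφ1 : ‖φ‖ = 1) :
    ‖⟪ψ, φ⟫_ℂ‖ ^ 2 ≤ ∑ i ∈ Finset.univ.filter (fun i : Fin n => (i : ℕ) < k),
      lam (σ i) := by
  let U := Submodule.span ℂ (Set.range u)
  have : FiniteDimensional ℂ U := FiniteDimensional.span_of_finite ℂ (Set.finite_range u)
  let t i := ‖U.starProjection (e i)‖ ^ 2
  let ψU := ∑ i, μ ((Real.sqrt (lam i) : ℂ) • U.starProjection (e i)) (f i)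
  have hψU : ⟪ψ, φ⟫_ℂ = ⟪ψU, φ⟫_ℂ := by
    have hsub : ψ - ψU =
        ∑ i, μ ((Real.sqrt (lam i) : ℂ) • (e i - U.starProjection (e i))) (f i) := by
      simp only [hψ, ψU, smul_sub, map_sub, LinearMap.sub_apply, map_smul, LinearMap.smul_apply,
        sum_sub_distrib]
    rw [← sub_eq_zero, ← inner_sub_left, hsub, hφ]
    refine inner_sum_apply₂_eq_zero hμ fun i j => ?_
    rw [inner_smul_left, U.starProjection_inner_eq_zero _ _ (Submodule.subset_span ⟨j, rfl⟩),
      mul_zero]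
  have hψU_norm : ‖ψU‖ ^ 2 = ∑ i, lam i * t i := by
    rw [norm_sq_sum_apply₂_of_orthonormal hμ hf]
    refine sum_congr rfl fun i _ => ?_
    rw [norm_smul, mul_pow, Complex.norm_real, Real.norm_eq_abs, sq_abs, Real.sq_sqrt (hlam i)]
  have ht1 (i) : t i ≤ 1 :=
    pow_le_one₀ (norm_nonneg _) ((U.norm_starProjection_apply_le _).trans_eq (he.1 i))
  have ht : ∑ i, t i ≤ k := (he.sum_norm_sq_starProjection_le_finrank U).trans <| by
    exact_mod_cast (finrank_range_le_card (R := ℂ) u).trans_eq (Fintype.card_fin k)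
  calc ‖⟪ψ, φ⟫_ℂ‖ ^ 2 ≤ ‖ψU‖ ^ 2 := by
        rw [hψU]; gcongr; simpa [hφ1] using norm_inner_le_norm (𝕜 := ℂ) ψU φ
    _ = ∑ i, lam (σ i) * t (σ i) := by rw [hψU_norm, Equiv.sum_comp σ (fun i => lam i * t i)]
    _ ≤ _ := hσ.sum_mul_le_sum_filter_lt hk1 hkn (fun _ => hlam _) (fun _ => by positivity)
        (fun _ => ht1 _) (by rwa [Equiv.sum_comp σ t])
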